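/- arXiv:1807.10566 — 3 statements merged into one kernel-verified Lean document; each statement's English description precedes it below -/
import Mathlib

section
/- Let p : E ⥤ B be a functor equipped with a cleavage of cocartesian lifts: for every object e of E and every morphism f : p(e) ⟶ b in B, there are a chosen object e_f of E with p(e_f) = b and a chosen morphism φ_f : e ⟶ e_f with p(φ_f) equal to f (modulo the equality p(e_f) = b), such that φ_f is cocartesian with respect to p, and such that the chosen lift of the identity morphism 𝟙_{p(e)} is 𝟙_e. Let K denote the comma category of p over the identity functor of B, whose objects are triples (e, b, f : p(e) ⟶ b), and let j : E ⥤ K be the functor e ↦ (e, p(e), 𝟙_{p(e)}). Then there exists a functor ℓ : K ⥤ E such that j ⋙ ℓ = 𝟭_E and ℓ ⋙ p equals the projection functor K ⥤ B sending (e, b, f) to b. -/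
open CategoryTheory

/-- A morphism `m : e ⟶ e'` is cocartesian with respect to a functor `P` if every
factorization of the image of a morphism `e ⟶ e''` through `P.map m` lifts uniquely. -/
def IsCocartesianMor {E : Type*} [Category E] {B : Type*} [Category B]
    (P : E ⥤ B) {e e' : E} (m : e ⟶ e') : Prop :=
  ∀ ⦃e'' : E⦄ (m' : e ⟶ e'') (b : P.obj e' ⟶ P.obj e''), P.map m ≫ b = P.map m' →
    ∃! ℓ : e' ⟶ e'', m ≫ ℓ = m' ∧ P.map ℓ = b

/-- The functor `E ⥤ Comma p (𝟭 B)` sending `e` to `(e, p(e), 𝟙_{p(e)})`. -/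
@[simps]
def commaUnit {E B : Type*} [Category E] [Category B] (p : E ⥤ B) :
    E ⥤ Comma p (𝟭 B) where
  obj e := { left := e, right := p.obj e, hom := 𝟙 (p.obj e) }
  map φ := { left := φ, right := p.map φ, w := by simp }

/-!
A cleavage sends `(e, b, f)` to the codomain of the chosen cocartesian lift of `f`, and a
morphism `(ε, φ)` to the unique factorization through the lift of `f₀`, lying over `φ`, of `ε`
followed by the lift of `f₁`. Uniqueness of these factorizations gives functoriality, and
normalization of the cleavage at identities makes this functor split `commaUnit p`.
-/

namespace IsCocartesianMor

variable {E B : Type*} [Category E] [Category B] {P : E ⥤ B} {e e' e'' : E} {m : e ⟶ e'}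

lemma hom_ext (hm : IsCocartesianMor P m) {ℓ₁ ℓ₂ : e' ⟶ e''} (hcomp : m ≫ ℓ₁ = m ≫ ℓ₂)
    (hmap : P.map ℓ₁ = P.map ℓ₂) : ℓ₁ = ℓ₂ :=
  (hm (m ≫ ℓ₂) (P.map ℓ₂) (P.map_comp m ℓ₂).symm).unique ⟨hcomp, hmap⟩ ⟨rfl, rfl⟩

noncomputable def desc (hm : IsCocartesianMor P m) (m' : e ⟶ e'') (b : P.obj e' ⟶ P.obj e'')
    (h : P.map m ≫ b = P.map m') : e' ⟶ e'' :=
  (hm m' b h).exists.choose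

lemma fac (hm : IsCocartesianMor P m) (m' : e ⟶ e'') (b : P.obj e' ⟶ P.obj e'')
    (h : P.map m ≫ b = P.map m') : m ≫ hm.desc m' b h = m' :=
  (hm m' b h).exists.choose_spec.1

lemma map_desc (hm : IsCocartesianMor P m) (m' : e ⟶ e'') (b : P.obj e' ⟶ P.obj e'')
    (h : P.map m ≫ b = P.map m') : P.map (hm.desc m' b h) = b :=
  (hm m' b h).exists.choose_spec.2

end IsCocartesianMor

structure CocartesianCleavage {E B : Type*} [Category E] [Category B] (p : E ⥤ B) where
  obj : ∀ (e : E) {b : B}, (p.obj e ⟶ b) → E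
  obj_over : ∀ (e : E) {b : B} (f : p.obj e ⟶ b), p.obj (obj e f) = b
  lift : ∀ (e : E) {b : B} (f : p.obj e ⟶ b), e ⟶ obj e f
  map_lift : ∀ (e : E) {b : B} (f : p.obj e ⟶ b),
    p.map (lift e f) = f ≫ eqToHom (obj_over e f).symm
  isCocartesian : ∀ (e : E) {b : B} (f : p.obj e ⟶ b), IsCocartesianMor p (lift e f)

namespace CocartesianCleavage

variable {E B : Type*} [Category E] [Category B] {p : E ⥤ B} (c : CocartesianCleavage p)

noncomputable def mapComma {X Y : Comma p (𝟭 B)} (g : X ⟶ Y) :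
    c.obj X.left X.hom ⟶ c.obj Y.left Y.hom :=
  (c.isCocartesian X.left X.hom).desc (g.left ≫ c.lift Y.left Y.hom)
    (eqToHom (c.obj_over X.left X.hom) ≫ g.right ≫ eqToHom (c.obj_over Y.left Y.hom).symm)
    (by simp [c.map_lift])

@[simp]
lemma lift_comp_mapComma {X Y : Comma p (𝟭 B)} (g : X ⟶ Y) :
    c.lift X.left X.hom ≫ c.mapComma g = g.left ≫ c.lift Y.left Y.hom :=
  IsCocartesianMor.fac ..

@[simp]
lemma map_mapComma {X Y : Comma p (𝟭 B)} (g : X ⟶ Y) :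
    p.map (c.mapComma g) =
      eqToHom (c.obj_over X.left X.hom) ≫ g.right ≫ eqToHom (c.obj_over Y.left Y.hom).symm :=
  IsCocartesianMor.map_desc ..

lemma mapComma_ext {X Y : Comma p (𝟭 B)} {ℓ₁ ℓ₂ : c.obj X.left X.hom ⟶ c.obj Y.left Y.hom}
    (hcomp : c.lift X.left X.hom ≫ ℓ₁ = c.lift X.left X.hom ≫ ℓ₂)
    (hmap : p.map ℓ₁ = p.map ℓ₂) : ℓ₁ = ℓ₂ :=
  (c.isCocartesian X.left X.hom).hom_ext hcomp hmap

noncomputable def functor : Comma p (𝟭 B) ⥤ E where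
  obj X := c.obj X.left X.hom
  map := c.mapComma
  map_id X := c.mapComma_ext (by simp) (by simp)
  map_comp f g := c.mapComma_ext
    (by simp only [lift_comp_mapComma, reassoc_of% c.lift_comp_mapComma f, Comma.comp_left,
      Category.assoc])
    (by simp)

lemma functor_comp : c.functor ⋙ p = Comma.snd p (𝟭 B) :=
  CategoryTheory.Functor.ext (fun X => c.obj_over X.left X.hom) (fun _ _ g => c.map_mapComma g)

lemma mapComma_commaUnit_map (hobj : ∀ e : E, c.obj e (𝟙 (p.obj e)) = e)
    (hlift : ∀ e : E, c.lift e (𝟙 (p.obj e)) = eqToHom (hobj e).symm) {e e' : E} (φ : e ⟶ e') :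
    c.mapComma ((commaUnit p).map φ) = eqToHom (hobj e) ≫ φ ≫ eqToHom (hobj e').symm := by
  refine c.mapComma_ext ?_ ?_
  · rw [c.lift_comp_mapComma]
    change φ ≫ c.lift e' (𝟙 _) = c.lift e (𝟙 _) ≫ _
    simp [hlift]
  · rw [c.map_mapComma]
    change eqToHom _ ≫ p.map φ ≫ eqToHom _ =
      p.map (eqToHom (hobj e) ≫ φ ≫ eqToHom (hobj e').symm)
    simp [eqToHom_map]

lemma commaUnit_comp_functor (hobj : ∀ e : E, c.obj e (𝟙 (p.obj e)) = e)
    (hlift : ∀ e : E, c.lift e (𝟙 (p.obj e)) = eqToHom (hobj e).symm) :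
    commaUnit p ⋙ c.functor = 𝟭 E :=
  CategoryTheory.Functor.ext hobj fun _ _ φ => c.mapComma_commaUnit_map hobj hlift φ

end CocartesianCleavage

/-- a functor `p : E ⥤ B` equipped with a normalized cleavage of cocartesian
lifts admits a functorial lift `ℓ : Comma p (𝟭 B) ⥤ E` splitting the unit
`j : E ⥤ Comma p (𝟭 B)` and lying over the second projection. -/
theorem opfibration_right_map {E B : Type*} [Category E] [Category B] (p : E ⥤ B)
    (Lobj : ∀ (e : E) {b : B}, (p.obj e ⟶ b) → E)
    (hLobj : ∀ (e : E) {b : B} (f : p.obj e ⟶ b), p.obj (Lobj e f) = b)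
    (Lmap : ∀ (e : E) {b : B} (f : p.obj e ⟶ b), e ⟶ Lobj e f)
    (hLmap : ∀ (e : E) {b : B} (f : p.obj e ⟶ b),
      p.map (Lmap e f) = f ≫ eqToHom (hLobj e f).symm)
    (hcocart : ∀ (e : E) {b : B} (f : p.obj e ⟶ b), IsCocartesianMor p (Lmap e f))
    (hLid : ∀ e : E, Lobj e (𝟙 (p.obj e)) = e)
    (hLmapid : ∀ e : E, Lmap e (𝟙 (p.obj e)) = eqToHom (hLid e).symm) :
    ∃ ℓ : Comma p (𝟭 B) ⥤ E,
      commaUnit p ⋙ ℓ = 𝟭 E ∧ ℓ ⋙ p = Comma.snd p (𝟭 B) := by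
  let c : CocartesianCleavage p := ⟨Lobj, hLobj, Lmap, hLmap, hcocart⟩
  exact ⟨c.functor, c.commaUnit_comp_functor hLid hLmapid, c.functor_comp⟩
end

section
/- Let Γ be a category and F : Γ ⥤ Cat a functor, and let π : Grothendieck F ⥤ Γ be the forgetful functor. Let K denote the comma category of π over the identity functor of Γ, whose objects are triples ((X, Y), b, f : X ⟶ b) with (X, Y) an object of Grothendieck F, and let j : Grothendieck F ⥤ K be the functor (X, Y) ↦ ((X, Y), X, 𝟙_X). Then there exists a functor ℓ : K ⥤ Grothendieck F sending ((X, Y), b, f) to (b, F(f)(Y)), such that j ⋙ ℓ = 𝟭 (the identity of Grothendieck F) and ℓ ⋙ π equals the projection functor K ⥤ Γ sending ((X, Y), b, f) to b. -/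
/-!
The morphism `(X, Y) ⟶ (b, F(f)(Y))` given by `f` and the identity on fibers is cocartesian:
a morphism out of `(b, F(f)(Y))` is determined by its base and its precomposite with this
lift. So `ℓ(ε, φ)` is pinned down as the map over `φ` commuting with the two lifts and `ε`, and
functoriality of `ℓ` as well as `j ⋙ ℓ = 𝟭` follow from that uniqueness, since the lift along an
identity is an identity.
-/

open CategoryTheory

universe v₂ u₂ v u

namespace CategoryTheory.Grothendieck

variable {C : Type*} [Category C] {F : C ⥤ Cat}

/-- A reducible copy of `Grothendieck.transport`: through the library's plain `def`, `simp`
cannot see that the base of the transported object is `c`. -/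
abbrev pushforward (x : Grothendieck F) {c : C} (t : x.base ⟶ c) : Grothendieck F :=
  ⟨c, (F.map t).toFunctor.obj x.fiber⟩

abbrev toPushforward (x : Grothendieck F) {c : C} (t : x.base ⟶ c) : x ⟶ x.pushforward t :=
  ⟨t, 𝟙 _⟩

lemma pushforward_id (x : Grothendieck F) : x.pushforward (𝟙 x.base) = x := by
  obtain ⟨b, y⟩ := x
  simp

lemma toPushforward_id (x : Grothendieck F) :
    x.toPushforward (𝟙 x.base) = eqToHom (pushforward_id x).symm :=
  Grothendieck.ext _ _ (by simp) (by simp)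

lemma toPushforward_cancel {x y : Grothendieck F} {c : C} {t : x.base ⟶ c}
    {g g' : x.pushforward t ⟶ y} (h_base : g.base = g'.base)
    (h : x.toPushforward t ≫ g = x.toPushforward t ≫ g') : g = g' := by
  obtain ⟨φ, u⟩ := g
  obtain ⟨φ', u'⟩ := g'
  obtain rfl : φ = φ' := h_base
  have h_fiber := Grothendieck.congr h
  simp only [comp_fiber, Functor.map_id, Category.id_comp] at h_fiber
  erw [eqToHom_trans_assoc, cancel_epi] at h_fiber
  rw [h_fiber]

variable {x y z : Grothendieck F} {c c' c'' : C}
  {t : x.base ⟶ c} {t' : y.base ⟶ c'} {t'' : z.base ⟶ c''}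

def pushforwardMap (g : x ⟶ y) (φ : c ⟶ c') (w : t ≫ φ = g.base ≫ t') :
    x.pushforward t ⟶ y.pushforward t' where
  base := φ
  fiber := eqToHom (by simpa using congrArg (fun f => (F.map f).toFunctor.obj x.fiber) w) ≫
    (F.map t').toFunctor.map g.fiber

lemma toPushforward_comp_pushforwardMap (g : x ⟶ y) (φ : c ⟶ c') (w : t ≫ φ = g.base ≫ t') :
    x.toPushforward t ≫ pushforwardMap g φ w = g ≫ y.toPushforward t' :=
  Grothendieck.ext _ _ w (by
    simp only [pushforwardMap, comp_fiber, Functor.map_id, Category.id_comp, Category.comp_id]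
    erw [eqToHom_trans_assoc, eqToHom_trans_assoc])

lemma pushforwardMap_id : pushforwardMap (𝟙 x) (𝟙 c) (t := t) (by simp) = 𝟙 _ :=
  toPushforward_cancel rfl (by simp [toPushforward_comp_pushforwardMap])

lemma pushforwardMap_comp (g : x ⟶ y) (h : y ⟶ z) (φ : c ⟶ c') (ψ : c' ⟶ c'')
    (w₁ : t ≫ φ = g.base ≫ t') (w₂ : t' ≫ ψ = h.base ≫ t'') :
    pushforwardMap (g ≫ h) (φ ≫ ψ) (by rw [comp_base, Category.assoc, ← w₂, reassoc_of% w₁]) =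
      pushforwardMap g φ w₁ ≫ pushforwardMap h ψ w₂ :=
  toPushforward_cancel rfl (by
    rw [toPushforward_comp_pushforwardMap, reassoc_of% toPushforward_comp_pushforwardMap,
      toPushforward_comp_pushforwardMap, Category.assoc])

variable (F) in
def pushforwardFunctor : Comma (forget F) (𝟭 C) ⥤ Grothendieck F where
  obj k := k.left.pushforward k.hom
  map γ := pushforwardMap γ.left γ.right γ.w.symm
  map_id _ := pushforwardMap_id
  map_comp γ δ := pushforwardMap_comp _ _ _ _ γ.w.symm δ.w.symm

lemma commaUnit_comp_pushforwardFunctor : commaUnit (forget F) ⋙ pushforwardFunctor F = 𝟭 _ := by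
  refine Functor.ext pushforward_id fun x y g => ?_
  have h := toPushforward_comp_pushforwardMap g g.base (t := 𝟙 x.base) (t' := 𝟙 y.base) (by simp)
  rw [toPushforward_id, toPushforward_id, eqToHom_comp_iff] at h
  exact h

end CategoryTheory.Grothendieck

/-- for `F : Γ ⥤ Cat`, the forgetful functor `π : Grothendieck F ⥤ Γ` admits a
functorial lift `ℓ : Comma π (𝟭 Γ) ⥤ Grothendieck F`, sending `((X, Y), b, f)` to
`(b, F(f)(Y))`, which splits the unit `j` and lies over the second projection. -/
theorem grothendieck_forget_right_map {Γ : Type u} [Category.{v} Γ]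
    (F : Γ ⥤ Cat.{v₂, u₂}) :
    ∃ ℓ : Comma (Grothendieck.forget F) (𝟭 Γ) ⥤ Grothendieck F,
      (∀ k : Comma (Grothendieck.forget F) (𝟭 Γ),
        ℓ.obj k = ({ base := k.right, fiber := (F.map k.hom).toFunctor.obj k.left.fiber } :
          Grothendieck F)) ∧
      commaUnit (Grothendieck.forget F) ⋙ ℓ = 𝟭 (Grothendieck F) ∧
      ℓ ⋙ Grothendieck.forget F = Comma.snd (Grothendieck.forget F) (𝟭 Γ) :=
  ⟨Grothendieck.pushforwardFunctor F, fun _ => rfl,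
    Grothendieck.commaUnit_comp_pushforwardFunctor, rfl⟩
end

section
/- Let C be a category, x an object of C, D : Under x ⥤ Cat a functor, and d an object of the category D(Under.mk (𝟙 x)). Then there exists a functor s : Under x ⥤ Grothendieck D such that s composed with the forgetful functor Grothendieck D ⥤ Under x equals the identity functor of Under x, and such that the fiber component of s at the object Under.mk (𝟙 x) is d (i.e., s sends Under.mk (𝟙 x) to the object of Grothendieck D with base Under.mk (𝟙 x) and fiber d). Explicitly, one may take s to send an object f : x ⟶ y of Under x to (f, D(the unique morphism 𝟙_x ⟶ f in Under x)(d)). This interprets the right hom elimination and computation rules in the empty context. -/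
/-!
`Under.mk (𝟙 x)` is initial in `Under x`, so `d` can be pushed along the unique morphism into every
object; functoriality of the resulting section (with `eqToHom` fibers) is the uniqueness of
morphisms out of an initial object, which also makes the section return `d` at the initial object.
-/

open CategoryTheory Limits

universe v₂ u₂ v u

namespace CategoryTheory.Grothendieck

variable {J : Type u} [Category.{v} J] {i : J} (hi : IsInitial i) (D : J ⥤ Cat.{v₂, u₂})

lemma map_obj_map_to_obj (d : D.obj i) {j k : J} (f : j ⟶ k) :
    (D.map f).toFunctor.obj ((D.map (hi.to j)).toFunctor.obj d) =
      (D.map (hi.to k)).toFunctor.obj d := by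
  rw [← hi.to_comp f, D.map_comp, Cat.Hom.comp_obj]

def sectionOfIsInitial (d : D.obj i) : J ⥤ Grothendieck D where
  obj j := ⟨j, (D.map (hi.to j)).toFunctor.obj d⟩
  map f := ⟨f, eqToHom (map_obj_map_to_obj hi D d f)⟩
  map_id j := by
    refine Grothendieck.ext _ _ rfl ?_
    simpa using eqToHom_trans _ _
  map_comp f g := by
    refine Grothendieck.ext _ _ rfl ?_
    simp only [comp_base, comp_fiber, eqToHom_map, eqToHom_trans]
    erw [eqToHom_trans, eqToHom_trans]

lemma sectionOfIsInitial_comp_forget (d : D.obj i) :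
    sectionOfIsInitial hi D d ⋙ forget D = 𝟭 J :=
  rfl

lemma sectionOfIsInitial_obj_initial (d : D.obj i) :
    (sectionOfIsInitial hi D d).obj i = ⟨i, d⟩ := by
  simp only [sectionOfIsInitial, hi.to_self, D.map_id, Cat.Hom.id_obj]

end CategoryTheory.Grothendieck

open Grothendieck in
/-- for `D : Under x ⥤ Cat` and an object `d` of the fiber over
`Under.mk (𝟙 x)`, there is a section `s` of the forgetful functor
`Grothendieck D ⥤ Under x` whose fiber component at `Under.mk (𝟙 x)` is `d`.
(Right hom elimination and computation in the empty context.) -/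
theorem right_hom_elim_computation {C : Type u} [Category.{v} C] (x : C)
    (D : Under x ⥤ Cat.{v₂, u₂}) (d : D.obj (Under.mk (𝟙 x))) :
    ∃ s : Under x ⥤ Grothendieck D,
      s ⋙ Grothendieck.forget D = 𝟭 (Under x) ∧
      s.obj (Under.mk (𝟙 x)) = ({ base := Under.mk (𝟙 x), fiber := d } : Grothendieck D) :=
  ⟨sectionOfIsInitial Under.mkIdInitial D d, sectionOfIsInitial_comp_forget _ D d,
    sectionOfIsInitial_obj_initial _ D d⟩
end
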